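/- arXiv:2602.07217 — 5 statements merged into one kernel-verified Lean document; each statement's English description precedes it below -/
import Mathlib

section
/- Let N be a finite nonempty set and a : N → ℝ with a(i) > 0 for all i and ∑_{i∈N} a(i) = 2. Then there exists a subset S ⊆ N with ∑_{i∈S} a(i) = 1 if and only if the maximum over all nonempty subsets S ⊆ N of the quantity ln(∑_{i∈S} a(i)) − ∑_{i∈S} a(i) equals −1. -/
/-- the core of the partition reduction: for positive weights
`a` summing to `2`, there is a subset summing to `1` iff the maximum of
`ln(∑_{i∈S} a i) − ∑_{i∈S} a i` over nonempty subsets `S` equals `-1`. -/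
theorem stmt2 {N : Type*} [Fintype N] [Nonempty N] [DecidableEq N]
    (a : N → ℝ) (ha : ∀ i, 0 < a i) (hsum : ∑ i, a i = 2) :
    (∃ S : Finset N, ∑ i ∈ S, a i = 1) ↔
      (Finset.univ.powerset.filter (fun S : Finset N => S.Nonempty)).sup'
          ⟨Finset.univ, by simp [Finset.univ_nonempty]⟩
          (fun S => Real.log (∑ i ∈ S, a i) - ∑ i ∈ S, a i) = -1 := by
  have hub : ∀ S : Finset N, S.Nonempty →
      Real.log (∑ i ∈ S, a i) - ∑ i ∈ S, a i ≤ -1 := by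
    intro S hS
    have hpos : 0 < ∑ i ∈ S, a i :=
      Finset.sum_pos (fun i _ => ha i) hS
    have := Real.log_le_sub_one_of_pos hpos
    linarith
  constructor
  · rintro ⟨S, hS⟩
    have hSne : S.Nonempty := by
      rcases S.eq_empty_or_nonempty with h | h
      · exfalso; rw [h] at hS; simp at hS
      · exact h
    apply le_antisymm
    · apply Finset.sup'_le
      intro S hmem
      simp only [Finset.mem_filter] at hmem
      exact hub S hmem.2
    · have hmem : S ∈ Finset.univ.powerset.filter (fun S : Finset N => S.Nonempty) := by
        simp [Finset.mem_filter, hSne]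
      calc (-1 : ℝ) = Real.log (∑ i ∈ S, a i) - ∑ i ∈ S, a i := by
            rw [hS]; simp
        _ ≤ _ := Finset.le_sup' (fun S => Real.log (∑ i ∈ S, a i) - ∑ i ∈ S, a i) hmem
  · intro h
    obtain ⟨S, hSmem, hSeq⟩ := Finset.exists_mem_eq_sup'
      (⟨Finset.univ, by simp [Finset.univ_nonempty]⟩ :
        (Finset.univ.powerset.filter (fun S : Finset N => S.Nonempty)).Nonempty)
      (fun S => Real.log (∑ i ∈ S, a i) - ∑ i ∈ S, a i)
    simp only [Finset.mem_filter] at hSmem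
    have hpos : 0 < ∑ i ∈ S, a i := Finset.sum_pos (fun i _ => ha i) hSmem.2
    refine ⟨S, ?_⟩
    by_contra hne
    have := Real.log_lt_sub_one_of_pos hpos hne
    rw [h] at hSeq
    linarith [hSeq.ge]
end

section
/- Let T, n, m ∈ ℕ, w : {1,…,n} → ℝ≥0, and for each i let a_i ≤ b_i ≤ c_i ≤ d_i be slots in {1,…,m}, with marginals P^s_{ik} ≥ 0 supported on {a_i,…,b_i} and P^e_{ik} ≥ 0 supported on {c_i,…,d_i}. Suppose nonnegative reals x^t_i, x^{ts}_{ik}, x^{te}_{ik} (for t ∈ {1,…,T}, i ∈ {1,…,n}, k ∈ {1,…,m}) satisfy: (i) x^t_i = ∑_{k=1}^m x^{ts}_{ik} = ∑_{k=1}^m x^{te}_{ik} for all i, t; (ii) x^{ts}_{ik} = 0 for k ∉ {a_i,…,b_i} and x^{te}_{ik} = 0 for k ∉ {c_i,…,d_i}; (iii) for every slot k, ∑_{t=1}^{T} ( ∑_{i : a_i ≤ k ≤ d_i} x^t_i − ∑_{i : a_i ≤ k ≤ b_i} ∑_{ℓ=k+1}^{b_i} x^{ts}_{iℓ} − ∑_{i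 : c_i ≤ k ≤ d_i} ∑_{ℓ=c_i}^{k−1} x^{te}_{iℓ} ) ≤ 1; (iv) ∑_{t=1}^{T} x^{ts}_{ik} ≤ P^s_{ik} and ∑_{t=1}^{T} x^{te}_{ik} ≤ P^e_{ik} for all i, k. If μ : {1,…,m} → ℝ≥0 satisfies ∑_{r=a_i}^{d_i} μ_r ≥ w_i for every i, then ∑_{t=1}^{T} ∑_{i=1}^{n} w_i x^t_i ≤ ∑_{r=1}^{m} μ_r + ∑_{i=1}^{n} ∑_{k=a_i}^{b_i} P^s_{ik} (∑_{r=a_i}^{k−1} μ_r) + ∑_{i=1}^{n} ∑_{k=c_i}^{d_i} P^e_{ik} (∑_{r=k+1}^{d_i} μ_r). -/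
lemma sum_Icc_ite (lo hi m : ℕ) (h1 : 1 ≤ lo) (h2 : hi ≤ m) (f : ℕ → ℝ) :
    ∑ k ∈ Finset.Icc lo hi, f k
      = ∑ k ∈ Finset.Icc 1 m, if lo ≤ k ∧ k ≤ hi then f k else 0 := by
  rw [← Finset.sum_filter]
  congr 1
  ext k
  simp only [Finset.mem_Icc, Finset.mem_filter]
  omega

lemma swapB (m aa bb dd : ℕ) (h1 : 1 ≤ aa) (h2 : bb ≤ dd) (h3 : dd ≤ m)
    (f : ℕ → ℕ → ℝ) :
    ∑ r ∈ Finset.Icc aa dd, ∑ ℓ ∈ Finset.Icc (r + 1) bb, f r ℓ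
      = ∑ ℓ ∈ Finset.Icc aa bb, ∑ r ∈ Finset.Icc aa (ℓ - 1), f r ℓ := by
  rw [sum_Icc_ite aa dd m h1 h3, sum_Icc_ite aa bb m h1 (le_trans h2 h3)]
  have L : ∀ r, (if aa ≤ r ∧ r ≤ dd then ∑ ℓ ∈ Finset.Icc (r+1) bb, f r ℓ else 0)
      = ∑ ℓ ∈ Finset.Icc 1 m, if (aa ≤ r ∧ r ≤ dd) ∧ (r+1 ≤ ℓ ∧ ℓ ≤ bb) then f r ℓ else 0 := by
    intro r
    split_ifs with h
    · rw [sum_Icc_ite (r+1) bb m (by omega) (le_trans h2 h3)]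
      exact Finset.sum_congr rfl fun ℓ _ => by simp [h]
    · rw [Finset.sum_eq_zero]; intro ℓ _; simp [h]
  have R : ∀ ℓ, (if aa ≤ ℓ ∧ ℓ ≤ bb then ∑ r ∈ Finset.Icc aa (ℓ-1), f r ℓ else 0)
      = ∑ r ∈ Finset.Icc 1 m, if (aa ≤ ℓ ∧ ℓ ≤ bb) ∧ (aa ≤ r ∧ r ≤ ℓ-1) then f r ℓ else 0 := by
    intro ℓ
    split_ifs with h
    · rw [sum_Icc_ite aa (ℓ-1) m h1 (by omega)]
      exact Finset.sum_congr rfl fun r _ => by simp [h]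
    · rw [Finset.sum_eq_zero]; intro r _; simp [h]
  simp only [L, R]
  rw [Finset.sum_comm]
  refine Finset.sum_congr rfl fun ℓ hℓ => Finset.sum_congr rfl fun r hr => ?_
  simp only [Finset.mem_Icc] at hℓ hr
  exact if_congr (by omega) rfl rfl

lemma swapE (m aa cc dd : ℕ) (h1 : 1 ≤ aa) (h2 : aa ≤ cc) (h2' : cc ≤ dd) (h3 : dd ≤ m)
    (f : ℕ → ℕ → ℝ) :
    ∑ r ∈ Finset.Icc aa dd, ∑ ℓ ∈ Finset.Icc cc (r - 1), f r ℓ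
      = ∑ ℓ ∈ Finset.Icc cc dd, ∑ r ∈ Finset.Icc (ℓ + 1) dd, f r ℓ := by
  rw [sum_Icc_ite aa dd m h1 h3, sum_Icc_ite cc dd m (by omega) h3]
  have L : ∀ r, (if aa ≤ r ∧ r ≤ dd then ∑ ℓ ∈ Finset.Icc cc (r-1), f r ℓ else 0)
      = ∑ ℓ ∈ Finset.Icc 1 m, if (aa ≤ r ∧ r ≤ dd) ∧ (cc ≤ ℓ ∧ ℓ ≤ r-1) then f r ℓ else 0 := by
    intro r
    split_ifs with h
    · rw [sum_Icc_ite cc (r-1) m (by omega) (by omega)]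
      exact Finset.sum_congr rfl fun ℓ _ => by simp [h]
    · rw [Finset.sum_eq_zero]; intro ℓ _; simp [h]
  have R : ∀ ℓ, (if cc ≤ ℓ ∧ ℓ ≤ dd then ∑ r ∈ Finset.Icc (ℓ+1) dd, f r ℓ else 0)
      = ∑ r ∈ Finset.Icc 1 m, if (cc ≤ ℓ ∧ ℓ ≤ dd) ∧ (ℓ+1 ≤ r ∧ r ≤ dd) then f r ℓ else 0 := by
    intro ℓ
    split_ifs with h
    · rw [sum_Icc_ite (ℓ+1) dd m (by omega) h3]
      exact Finset.sum_congr rfl fun r _ => by simp [h]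
    · rw [Finset.sum_eq_zero]; intro r _; simp [h]
  simp only [L, R]
  rw [Finset.sum_comm]
  refine Finset.sum_congr rfl fun ℓ hℓ => Finset.sum_congr rfl fun r hr => ?_
  simp only [Finset.mem_Icc] at hℓ hr
  exact if_congr (by omega) rfl rfl

lemma sum_interval_comm {n : ℕ} (m : ℕ) (a d : Fin n → ℕ)
    (ha : ∀ i, 1 ≤ a i) (hd : ∀ i, d i ≤ m) (g : Fin n → ℕ → ℝ) :
    ∑ i, ∑ r ∈ Finset.Icc (a i) (d i), g i r
      = ∑ r ∈ Finset.Icc 1 m, ∑ i ∈ Finset.univ.filter (fun i => a i ≤ r ∧ r ≤ d i), g i r := by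
  calc ∑ i, ∑ r ∈ Finset.Icc (a i) (d i), g i r
      = ∑ i, ∑ r ∈ Finset.Icc 1 m, if a i ≤ r ∧ r ≤ d i then g i r else 0 :=
        Finset.sum_congr rfl fun i _ => sum_Icc_ite (a i) (d i) m (ha i) (hd i) (g i)
    _ = ∑ r ∈ Finset.Icc 1 m, ∑ i, if a i ≤ r ∧ r ≤ d i then g i r else 0 := Finset.sum_comm
    _ = _ := Finset.sum_congr rfl fun r _ => (Finset.sum_filter _ _).symm


/-- weak duality for the LP relaxation (DLP-P) of dynamic
scheduling with random start and end times: any feasible primal solution is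
bounded by the dual objective obtained from a fractional clique cover `μ` of
the pessimistic interval graph (remaining dual variables set to zero). -/
theorem stmt6 (T n m : ℕ) (w : Fin n → ℝ) (hw : ∀ i, 0 ≤ w i)
    (a b c d : Fin n → ℕ)
    (ha : ∀ i, 1 ≤ a i) (hab : ∀ i, a i ≤ b i) (hbc : ∀ i, b i ≤ c i)
    (hcd : ∀ i, c i ≤ d i) (hdm : ∀ i, d i ≤ m)
    (Ps Pe : Fin n → ℕ → ℝ)
    (hPs0 : ∀ i k, 0 ≤ Ps i k) (hPe0 : ∀ i k, 0 ≤ Pe i k)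
    (hPsSupp : ∀ i k, k ∉ Finset.Icc (a i) (b i) → Ps i k = 0)
    (hPeSupp : ∀ i k, k ∉ Finset.Icc (c i) (d i) → Pe i k = 0)
    (x : Fin T → Fin n → ℝ) (xs xe : Fin T → Fin n → ℕ → ℝ)
    (hx0 : ∀ t i, 0 ≤ x t i)
    (hxs0 : ∀ t i k, 0 ≤ xs t i k) (hxe0 : ∀ t i k, 0 ≤ xe t i k)
    -- (i) consistency of the scheduling probabilities
    (hxsSum : ∀ t i, x t i = ∑ k ∈ Finset.Icc 1 m, xs t i k)
    (hxeSum : ∀ t i, x t i = ∑ k ∈ Finset.Icc 1 m, xe t i k)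
    -- (ii) supports
    (hxsSupp : ∀ t i k, k ∉ Finset.Icc (a i) (b i) → xs t i k = 0)
    (hxeSupp : ∀ t i k, k ∉ Finset.Icc (c i) (d i) → xe t i k = 0)
    -- (iii) slot capacity
    (hcap : ∀ k ∈ Finset.Icc 1 m,
      ∑ t : Fin T,
        ((∑ i ∈ Finset.univ.filter (fun i => a i ≤ k ∧ k ≤ d i), x t i)
          - (∑ i ∈ Finset.univ.filter (fun i => a i ≤ k ∧ k ≤ b i),
              ∑ ℓ ∈ Finset.Icc (k + 1) (b i), xs t i ℓ)
          - (∑ i ∈ Finset.univ.filter (fun i => c i ≤ k ∧ k ≤ d i),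
              ∑ ℓ ∈ Finset.Icc (c i) (k - 1), xe t i ℓ)) ≤ 1)
    -- (iv) marginal bounds
    (hmargS : ∀ i k, ∑ t : Fin T, xs t i k ≤ Ps i k)
    (hmargE : ∀ i k, ∑ t : Fin T, xe t i k ≤ Pe i k)
    -- fractional clique cover of the pessimistic interval graph
    (μ : ℕ → ℝ) (hμ : ∀ r, 0 ≤ μ r)
    (hcover : ∀ i, w i ≤ ∑ r ∈ Finset.Icc (a i) (d i), μ r) :
    ∑ t : Fin T, ∑ i, w i * x t i
      ≤ (∑ r ∈ Finset.Icc 1 m, μ r)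
        + (∑ i, ∑ k ∈ Finset.Icc (a i) (b i),
            Ps i k * ∑ r ∈ Finset.Icc (a i) (k - 1), μ r)
        + (∑ i, ∑ k ∈ Finset.Icc (c i) (d i),
            Pe i k * ∑ r ∈ Finset.Icc (k + 1) (d i), μ r) := by

  -- abbreviations for the "pending start" and "pending end" masses
  set S : Fin T → Fin n → ℕ → ℝ :=
    fun t i r => ∑ ℓ ∈ Finset.Icc (r + 1) (b i), xs t i ℓ with hS
  set E : Fin T → Fin n → ℕ → ℝ :=
    fun t i r => ∑ ℓ ∈ Finset.Icc (c i) (r - 1), xe t i ℓ with hE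
  -- Step 1: bound by the cover
  have step1 : ∑ t : Fin T, ∑ i, w i * x t i
      ≤ ∑ t : Fin T, ∑ i, ∑ r ∈ Finset.Icc (a i) (d i), μ r * x t i := by
    refine Finset.sum_le_sum fun t _ => Finset.sum_le_sum fun i _ => ?_
    calc w i * x t i ≤ (∑ r ∈ Finset.Icc (a i) (d i), μ r) * x t i :=
          mul_le_mul_of_nonneg_right (hcover i) (hx0 t i)
      _ = ∑ r ∈ Finset.Icc (a i) (d i), μ r * x t i := Finset.sum_mul _ _ _
  -- Step 2: decomposition
  have step2 : ∑ t : Fin T, ∑ i, ∑ r ∈ Finset.Icc (a i) (d i), μ r * x t i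
      = (∑ t : Fin T, ∑ i, ∑ r ∈ Finset.Icc (a i) (d i),
            μ r * (x t i - S t i r - E t i r))
        + (∑ t : Fin T, ∑ i, ∑ r ∈ Finset.Icc (a i) (d i), μ r * S t i r)
        + (∑ t : Fin T, ∑ i, ∑ r ∈ Finset.Icc (a i) (d i), μ r * E t i r) := by
    simp only [← Finset.sum_add_distrib]
    refine Finset.sum_congr rfl fun t _ => Finset.sum_congr rfl fun i _ =>
      Finset.sum_congr rfl fun r _ => by ring
  -- Step 3a: capacity bound
  have hA : (∑ t : Fin T, ∑ i, ∑ r ∈ Finset.Icc (a i) (d i),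
        μ r * (x t i - S t i r - E t i r)) ≤ ∑ r ∈ Finset.Icc 1 m, μ r := by
    have hrw : ∀ t : Fin T,
        ∑ i, ∑ r ∈ Finset.Icc (a i) (d i), μ r * (x t i - S t i r - E t i r)
        = ∑ r ∈ Finset.Icc 1 m,
            μ r * ((∑ i ∈ Finset.univ.filter (fun i => a i ≤ r ∧ r ≤ d i), x t i)
              - (∑ i ∈ Finset.univ.filter (fun i => a i ≤ r ∧ r ≤ b i), S t i r)
              - (∑ i ∈ Finset.univ.filter (fun i => c i ≤ r ∧ r ≤ d i), E t i r)) := by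
      intro t
      rw [sum_interval_comm m a d ha hdm]
      refine Finset.sum_congr rfl fun r hr => ?_
      rw [← Finset.mul_sum]
      congr 1
      rw [Finset.sum_sub_distrib, Finset.sum_sub_distrib]
      have h1 : ∑ i ∈ Finset.univ.filter (fun i => a i ≤ r ∧ r ≤ d i), S t i r
          = ∑ i ∈ Finset.univ.filter (fun i => a i ≤ r ∧ r ≤ b i), S t i r := by
        refine (Finset.sum_subset ?_ ?_).symm
        · intro i hi
          simp only [Finset.mem_filter, Finset.mem_univ, true_and] at hi ⊢
          exact ⟨hi.1, le_trans hi.2 (le_trans (hbc i) (hcd i))⟩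
        · intro i hi hni
          simp only [Finset.mem_filter, Finset.mem_univ, true_and] at hi hni
          have : b i < r := by omega
          simp only [hS]
          rw [Finset.Icc_eq_empty (by omega), Finset.sum_empty]
      have h2 : ∑ i ∈ Finset.univ.filter (fun i => a i ≤ r ∧ r ≤ d i), E t i r
          = ∑ i ∈ Finset.univ.filter (fun i => c i ≤ r ∧ r ≤ d i), E t i r := by
        refine (Finset.sum_subset ?_ ?_).symm
        · intro i hi
          simp only [Finset.mem_filter, Finset.mem_univ, true_and] at hi ⊢
          exact ⟨le_trans (le_trans (hab i) (hbc i)) hi.1, hi.2⟩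
        · intro i hi hni
          simp only [Finset.mem_filter, Finset.mem_univ, true_and] at hi hni
          have : r < c i := by omega
          simp only [hE]
          rw [Finset.Icc_eq_empty (by omega), Finset.sum_empty]
      rw [h1, h2]
    calc (∑ t : Fin T, ∑ i, ∑ r ∈ Finset.Icc (a i) (d i),
            μ r * (x t i - S t i r - E t i r))
        = ∑ t : Fin T, ∑ r ∈ Finset.Icc 1 m,
            μ r * ((∑ i ∈ Finset.univ.filter (fun i => a i ≤ r ∧ r ≤ d i), x t i)
              - (∑ i ∈ Finset.univ.filter (fun i => a i ≤ r ∧ r ≤ b i), S t i r)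
              - (∑ i ∈ Finset.univ.filter (fun i => c i ≤ r ∧ r ≤ d i), E t i r)) :=
          Finset.sum_congr rfl fun t _ => hrw t
      _ = ∑ r ∈ Finset.Icc 1 m, ∑ t : Fin T,
            μ r * ((∑ i ∈ Finset.univ.filter (fun i => a i ≤ r ∧ r ≤ d i), x t i)
              - (∑ i ∈ Finset.univ.filter (fun i => a i ≤ r ∧ r ≤ b i), S t i r)
              - (∑ i ∈ Finset.univ.filter (fun i => c i ≤ r ∧ r ≤ d i), E t i r)) :=
          Finset.sum_comm
      _ ≤ ∑ r ∈ Finset.Icc 1 m, μ r := by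
          refine Finset.sum_le_sum fun r hr => ?_
          rw [← Finset.mul_sum]
          calc μ r * _ ≤ μ r * 1 := mul_le_mul_of_nonneg_left (hcap r hr) (hμ r)
            _ = μ r := mul_one _
  -- Step 3b: start-marginal bound
  have hB : (∑ t : Fin T, ∑ i, ∑ r ∈ Finset.Icc (a i) (d i), μ r * S t i r)
      ≤ ∑ i, ∑ k ∈ Finset.Icc (a i) (b i),
          Ps i k * ∑ r ∈ Finset.Icc (a i) (k - 1), μ r := by
    have hrw : ∀ (t : Fin T) (i : Fin n),
        ∑ r ∈ Finset.Icc (a i) (d i), μ r * S t i r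
        = ∑ ℓ ∈ Finset.Icc (a i) (b i),
            (∑ r ∈ Finset.Icc (a i) (ℓ - 1), μ r) * xs t i ℓ := by
      intro t i
      simp only [hS, Finset.mul_sum]
      rw [swapB m (a i) (b i) (d i) (ha i) (le_trans (hbc i) (hcd i)) (hdm i)
        (fun r ℓ => μ r * xs t i ℓ)]
      exact Finset.sum_congr rfl fun ℓ _ => (Finset.sum_mul _ _ _).symm
    calc (∑ t : Fin T, ∑ i, ∑ r ∈ Finset.Icc (a i) (d i), μ r * S t i r)
        = ∑ t : Fin T, ∑ i, ∑ ℓ ∈ Finset.Icc (a i) (b i),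
            (∑ r ∈ Finset.Icc (a i) (ℓ - 1), μ r) * xs t i ℓ :=
          Finset.sum_congr rfl fun t _ => Finset.sum_congr rfl fun i _ => hrw t i
      _ = ∑ i, ∑ t : Fin T, ∑ ℓ ∈ Finset.Icc (a i) (b i),
            (∑ r ∈ Finset.Icc (a i) (ℓ - 1), μ r) * xs t i ℓ := Finset.sum_comm
      _ = ∑ i, ∑ ℓ ∈ Finset.Icc (a i) (b i),
            (∑ r ∈ Finset.Icc (a i) (ℓ - 1), μ r) * ∑ t : Fin T, xs t i ℓ := by
          refine Finset.sum_congr rfl fun i _ => ?_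
          rw [Finset.sum_comm]
          exact Finset.sum_congr rfl fun ℓ _ => (Finset.mul_sum _ _ _).symm
      _ ≤ ∑ i, ∑ k ∈ Finset.Icc (a i) (b i),
            Ps i k * ∑ r ∈ Finset.Icc (a i) (k - 1), μ r := by
          refine Finset.sum_le_sum fun i _ => Finset.sum_le_sum fun k _ => ?_
          rw [mul_comm (Ps i k)]
          exact mul_le_mul_of_nonneg_left (hmargS i k)
            (Finset.sum_nonneg fun r _ => hμ r)
  -- Step 3c: end-marginal bound
  have hC : (∑ t : Fin T, ∑ i, ∑ r ∈ Finset.Icc (a i) (d i), μ r * E t i r)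
      ≤ ∑ i, ∑ k ∈ Finset.Icc (c i) (d i),
          Pe i k * ∑ r ∈ Finset.Icc (k + 1) (d i), μ r := by
    have hrw : ∀ (t : Fin T) (i : Fin n),
        ∑ r ∈ Finset.Icc (a i) (d i), μ r * E t i r
        = ∑ ℓ ∈ Finset.Icc (c i) (d i),
            (∑ r ∈ Finset.Icc (ℓ + 1) (d i), μ r) * xe t i ℓ := by
      intro t i
      simp only [hE, Finset.mul_sum]
      rw [swapE m (a i) (c i) (d i) (ha i) (le_trans (hab i) (hbc i)) (hcd i) (hdm i)
        (fun r ℓ => μ r * xe t i ℓ)]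
      exact Finset.sum_congr rfl fun ℓ _ => (Finset.sum_mul _ _ _).symm
    calc (∑ t : Fin T, ∑ i, ∑ r ∈ Finset.Icc (a i) (d i), μ r * E t i r)
        = ∑ t : Fin T, ∑ i, ∑ ℓ ∈ Finset.Icc (c i) (d i),
            (∑ r ∈ Finset.Icc (ℓ + 1) (d i), μ r) * xe t i ℓ :=
          Finset.sum_congr rfl fun t _ => Finset.sum_congr rfl fun i _ => hrw t i
      _ = ∑ i, ∑ t : Fin T, ∑ ℓ ∈ Finset.Icc (c i) (d i),
            (∑ r ∈ Finset.Icc (ℓ + 1) (d i), μ r) * xe t i ℓ := Finset.sum_comm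
      _ = ∑ i, ∑ ℓ ∈ Finset.Icc (c i) (d i),
            (∑ r ∈ Finset.Icc (ℓ + 1) (d i), μ r) * ∑ t : Fin T, xe t i ℓ := by
          refine Finset.sum_congr rfl fun i _ => ?_
          rw [Finset.sum_comm]
          exact Finset.sum_congr rfl fun ℓ _ => (Finset.mul_sum _ _ _).symm
      _ ≤ ∑ i, ∑ k ∈ Finset.Icc (c i) (d i),
            Pe i k * ∑ r ∈ Finset.Icc (k + 1) (d i), μ r := by
          refine Finset.sum_le_sum fun i _ => Finset.sum_le_sum fun k _ => ?_
          rw [mul_comm (Pe i k)]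
          exact mul_le_mul_of_nonneg_left (hmargE i k)
            (Finset.sum_nonneg fun r _ => hμ r)
  calc ∑ t : Fin T, ∑ i, w i * x t i
      ≤ ∑ t : Fin T, ∑ i, ∑ r ∈ Finset.Icc (a i) (d i), μ r * x t i := step1
    _ = _ + _ + _ := step2
    _ ≤ _ := add_le_add (add_le_add hA hB) hC
end

section
/- Let n, m ∈ ℕ, w : {1,…,n} → ℝ, and for each i let a_i ≤ d_i be slots in {1,…,m}. Let P^o_{ir} ≥ 0 for all i, r, and suppose there is p* > 0 with P^o_{ir} ≥ p* for every i and every r ∈ {a_i,…,d_i}. Suppose μ : {1,…,m} → ℝ≥0 satisfies ∑_{r=a_i}^{d_i} μ_r ≥ w_i for every i. Then every x : {1,…,n} → ℝ≥0 with ∑_{i=1}^{n} P^o_{ik} x_i ≤ 1 for all slots k satisfies ∑_{i=1}^{n} w_i x_i ≤ (1/p*) · ∑_{r=1}^{m} μ_r. -/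
/-- the bound OPT ≤ α_pes / p* for the conservative LP
relaxation (CDLP-P): scaling a pessimistic fractional clique cover by `1/p*`
upper-bounds every feasible solution of (CDLP-P). -/
theorem stmt9 (n m : ℕ) (w : Fin n → ℝ) (a d : Fin n → ℕ)
    (ha : ∀ i, 1 ≤ a i) (had : ∀ i, a i ≤ d i) (hdm : ∀ i, d i ≤ m)
    (Po : Fin n → ℕ → ℝ) (hPo : ∀ i r, 0 ≤ Po i r)
    (p : ℝ) (hp : 0 < p)
    (hpP : ∀ i, ∀ r ∈ Finset.Icc (a i) (d i), p ≤ Po i r)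
    (μ : ℕ → ℝ) (hμ : ∀ r, 0 ≤ μ r)
    (hcover : ∀ i, w i ≤ ∑ r ∈ Finset.Icc (a i) (d i), μ r) :
    ∀ x : Fin n → ℝ, (∀ i, 0 ≤ x i) →
      (∀ k ∈ Finset.Icc 1 m, ∑ i, Po i k * x i ≤ 1) →
      ∑ i, w i * x i ≤ (1 / p) * ∑ r ∈ Finset.Icc 1 m, μ r := by
  intro x hx hfeas
  have hsub : ∀ i : Fin n, Finset.Icc (a i) (d i) ⊆ Finset.Icc 1 m := by
    intro i r hr
    simp only [Finset.mem_Icc] at *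
    exact ⟨le_trans (ha i) hr.1, le_trans hr.2 (hdm i)⟩
  calc ∑ i, w i * x i
      ≤ ∑ i, (∑ r ∈ Finset.Icc (a i) (d i), μ r) * x i := by
        apply Finset.sum_le_sum
        intro i _
        exact mul_le_mul_of_nonneg_right (hcover i) (hx i)
    _ = ∑ i, ∑ r ∈ Finset.Icc 1 m,
          (if r ∈ Finset.Icc (a i) (d i) then μ r * x i else 0) := by
        apply Finset.sum_congr rfl
        intro i _
        rw [Finset.sum_ite_mem, Finset.inter_eq_right.mpr (hsub i),
          Finset.sum_mul]
    _ = ∑ r ∈ Finset.Icc 1 m, ∑ i,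
          (if r ∈ Finset.Icc (a i) (d i) then μ r * x i else 0) :=
        Finset.sum_comm
    _ ≤ ∑ r ∈ Finset.Icc 1 m, (1 / p) * μ r := by
        apply Finset.sum_le_sum
        intro r hr
        have step : ∀ i : Fin n,
            (if r ∈ Finset.Icc (a i) (d i) then μ r * x i else 0)
              ≤ μ r * ((1 / p) * (Po i r * x i)) := by
          intro i
          split_ifs with h
          · apply mul_le_mul_of_nonneg_left _ (hμ r)
            have h1 := hpP i r h
            have hx' := hx i
            rw [one_div, inv_mul_eq_div, le_div_iff₀ hp]
            nlinarith
          · have := hμ r; have := hPo i r; have := hx i; positivity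
        calc ∑ i, (if r ∈ Finset.Icc (a i) (d i) then μ r * x i else 0)
            ≤ ∑ i, μ r * ((1 / p) * (Po i r * x i)) :=
              Finset.sum_le_sum fun i _ => step i
          _ = μ r * (1 / p) * ∑ i, Po i r * x i := by
              rw [Finset.mul_sum]
              exact Finset.sum_congr rfl fun i _ => by ring
          _ ≤ μ r * (1 / p) * 1 := by
              apply mul_le_mul_of_nonneg_left (hfeas r hr)
              have := hμ r; positivity
          _ = (1 / p) * μ r := by ring
    _ = (1 / p) * ∑ r ∈ Finset.Icc 1 m, μ r := (Finset.mul_sum _ _ _).symm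
end

section
/- Let T, n, m ∈ ℕ, and for each task i ∈ {1,…,n} let a_i ≤ b_i ≤ c_i ≤ d_i be slots in {1,…,m}, with marginals P^s_{ik} ≥ 0 supported on {a_i,…,b_i} and P^e_{ik} ≥ 0 supported on {c_i,…,d_i}. Suppose nonnegative reals x^t_i, x^{ts}_{ik}, x^{te}_{ik} satisfy: (i) x^t_i = ∑_{k=1}^m x^{ts}_{ik} = ∑_{k=1}^m x^{te}_{ik} for all i, t; (ii) x^{ts}_{ik} = 0 for k ∉ {a_i,…,b_i} and x^{te}_{ik} = 0 for k ∉ {c_i,…,d_i}; (iii) for every slot k, ∑_{t=1}^{T} ( ∑_{i : a_i ≤ k ≤ d_i} x^t_i − ∑_{i : a_i ≤ k ≤ b_i} ∑_{ℓ=k+1}^{b_i} x^{ts}_{iℓ} − ∑_{i : c_i ≤ k ≤ d_i} ∑_{ℓ=c_i}^{k−1} x^{te}_{iℓ} ) ≤ 1; (iv) ∑_{t=1}^{T} x^{ts}_{ik} ≤ P^s_{ik} and ∑_{t=1}^{T} x^{te}_{ik} ≤ P^e_{ik} for all i, k. Suppose further that J ⊆ {1,…,m} is nonempty and κ : {1,…,n}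 → J is such that for each task i, {a_i,…,d_i} ∩ J = {κ(i)}. Then ∑_{t=1}^{T} ∑_{i=1}^{n} x^t_i ≤ |J| + ∑_{i=1}^{n} ( ∑_{ℓ=κ(i)+1}^{b_i} P^s_{iℓ} + ∑_{ℓ=c_i}^{κ(i)−1} P^e_{iℓ} ). -/
/-- uniform-weight bound for (DLP-P): if `J` is a clique cover
of the pessimistic interval graph meeting each pessimistic interval
`{a_i,…,d_i}` in exactly the one slot `κ i`, then any feasible solution has
total value at most `|J|` plus the correction terms
`∑_{ℓ=κ(i)+1}^{b_i} P^s_{iℓ} + ∑_{ℓ=c_i}^{κ(i)−1} P^e_{iℓ}`. -/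
theorem stmt11 (T n m : ℕ)
    (a b c d : Fin n → ℕ)
    (ha : ∀ i, 1 ≤ a i) (hab : ∀ i, a i ≤ b i) (hbc : ∀ i, b i ≤ c i)
    (hcd : ∀ i, c i ≤ d i) (hdm : ∀ i, d i ≤ m)
    (Ps Pe : Fin n → ℕ → ℝ)
    (hPs0 : ∀ i k, 0 ≤ Ps i k) (hPe0 : ∀ i k, 0 ≤ Pe i k)
    (hPsSupp : ∀ i k, k ∉ Finset.Icc (a i) (b i) → Ps i k = 0)
    (hPeSupp : ∀ i k, k ∉ Finset.Icc (c i) (d i) → Pe i k = 0)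
    (x : Fin T → Fin n → ℝ) (xs xe : Fin T → Fin n → ℕ → ℝ)
    (hx0 : ∀ t i, 0 ≤ x t i)
    (hxs0 : ∀ t i k, 0 ≤ xs t i k) (hxe0 : ∀ t i k, 0 ≤ xe t i k)
    -- (i) consistency of the scheduling probabilities
    (hxsSum : ∀ t i, x t i = ∑ k ∈ Finset.Icc 1 m, xs t i k)
    (hxeSum : ∀ t i, x t i = ∑ k ∈ Finset.Icc 1 m, xe t i k)
    -- (ii) supports
    (hxsSupp : ∀ t i k, k ∉ Finset.Icc (a i) (b i) → xs t i k = 0)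
    (hxeSupp : ∀ t i k, k ∉ Finset.Icc (c i) (d i) → xe t i k = 0)
    -- (iii) slot capacity
    (hcap : ∀ k ∈ Finset.Icc 1 m,
      ∑ t : Fin T,
        ((∑ i ∈ Finset.univ.filter (fun i => a i ≤ k ∧ k ≤ d i), x t i)
          - (∑ i ∈ Finset.univ.filter (fun i => a i ≤ k ∧ k ≤ b i),
              ∑ ℓ ∈ Finset.Icc (k + 1) (b i), xs t i ℓ)
          - (∑ i ∈ Finset.univ.filter (fun i => c i ≤ k ∧ k ≤ d i),
              ∑ ℓ ∈ Finset.Icc (c i) (k - 1), xe t i ℓ)) ≤ 1)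
    -- (iv) marginal bounds
    (hmargS : ∀ i k, ∑ t : Fin T, xs t i k ≤ Ps i k)
    (hmargE : ∀ i k, ∑ t : Fin T, xe t i k ≤ Pe i k)
    -- minimum clique cover of the pessimistic interval graph
    (J : Finset ℕ) (hJne : J.Nonempty) (hJm : J ⊆ Finset.Icc 1 m)
    (κ : Fin n → ℕ)
    (hκ : ∀ i, Finset.Icc (a i) (d i) ∩ J = {κ i}) :
    ∑ t : Fin T, ∑ i, x t i
      ≤ (J.card : ℝ)
        + ∑ i, ((∑ ℓ ∈ Finset.Icc (κ i + 1) (b i), Ps i ℓ)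
            + ∑ ℓ ∈ Finset.Icc (c i) (κ i - 1), Pe i ℓ) := by
  have hκJ : ∀ i, κ i ∈ J ∧ a i ≤ κ i ∧ κ i ≤ d i := by
    intro i
    have h : κ i ∈ Finset.Icc (a i) (d i) ∩ J := by
      rw [hκ i]; exact Finset.mem_singleton_self _
    simp only [Finset.mem_inter, Finset.mem_Icc] at h
    tauto
  have hfd : ∀ i : Fin n, J.filter (fun k => a i ≤ k ∧ k ≤ d i) = {κ i} := by
    intro i
    rw [← hκ i]
    ext k
    simp only [Finset.mem_filter, Finset.mem_inter, Finset.mem_Icc]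
    tauto
  have hfB : ∀ (t : Fin T) (i : Fin n),
      ∑ k ∈ J.filter (fun k => a i ≤ k ∧ k ≤ b i),
        ∑ ℓ ∈ Finset.Icc (k + 1) (b i), xs t i ℓ
      = ∑ ℓ ∈ Finset.Icc (κ i + 1) (b i), xs t i ℓ := by
    intro t i
    by_cases h : κ i ≤ b i
    · have hf : J.filter (fun k => a i ≤ k ∧ k ≤ b i) = {κ i} := by
        ext k
        constructor
        · intro hk
          have hk' : k ∈ J.filter (fun k => a i ≤ k ∧ k ≤ d i) := by
            simp only [Finset.mem_filter] at hk ⊢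
            exact ⟨hk.1, hk.2.1, le_trans hk.2.2 (le_trans (hbc i) (hcd i))⟩
          rwa [hfd i] at hk'
        · intro hk
          simp only [Finset.mem_singleton] at hk
          subst hk
          simp [Finset.mem_filter, (hκJ i).1, (hκJ i).2.1, h]
      rw [hf, Finset.sum_singleton]
    · have h1 : J.filter (fun k => a i ≤ k ∧ k ≤ b i) = ∅ := by
        ext k
        simp only [Finset.mem_filter, Finset.notMem_empty, iff_false, not_and]
        intro hkJ hak hkb
        have hk' : k ∈ J.filter (fun k => a i ≤ k ∧ k ≤ d i) :=
          Finset.mem_filter.2 ⟨hkJ, hak, le_trans hkb (le_trans (hbc i) (hcd i))⟩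
        rw [hfd i, Finset.mem_singleton] at hk'
        subst hk'
        exact h hkb
      have h2 : Finset.Icc (κ i + 1) (b i) = ∅ := by
        apply Finset.Icc_eq_empty; omega
      rw [h1, h2]; simp
  have hfC : ∀ (t : Fin T) (i : Fin n),
      ∑ k ∈ J.filter (fun k => c i ≤ k ∧ k ≤ d i),
        ∑ ℓ ∈ Finset.Icc (c i) (k - 1), xe t i ℓ
      = ∑ ℓ ∈ Finset.Icc (c i) (κ i - 1), xe t i ℓ := by
    intro t i
    by_cases h : c i ≤ κ i
    · have hf : J.filter (fun k => c i ≤ k ∧ k ≤ d i) = {κ i} := by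
        ext k
        constructor
        · intro hk
          have hk' : k ∈ J.filter (fun k => a i ≤ k ∧ k ≤ d i) := by
            simp only [Finset.mem_filter] at hk ⊢
            exact ⟨hk.1, le_trans (le_trans (hab i) (hbc i)) hk.2.1, hk.2.2⟩
          rwa [hfd i] at hk'
        · intro hk
          simp only [Finset.mem_singleton] at hk
          subst hk
          simp [Finset.mem_filter, (hκJ i).1, (hκJ i).2.2, h]
      rw [hf, Finset.sum_singleton]
    · have h1 : J.filter (fun k => c i ≤ k ∧ k ≤ d i) = ∅ := by
        ext k
        simp only [Finset.mem_filter, Finset.notMem_empty, iff_false, not_and]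
        intro hkJ hck hkd
        have hk' : k ∈ J.filter (fun k => a i ≤ k ∧ k ≤ d i) :=
          Finset.mem_filter.2 ⟨hkJ, le_trans (le_trans (hab i) (hbc i)) hck, hkd⟩
        rw [hfd i, Finset.mem_singleton] at hk'
        subst hk'
        exact h hck
      have h2 : Finset.Icc (c i) (κ i - 1) = ∅ := by
        apply Finset.Icc_eq_empty; omega
      rw [h1, h2]; simp
  -- sum capacity constraint over J
  have h1 : ∑ k ∈ J, (∑ t : Fin T,
        ((∑ i ∈ Finset.univ.filter (fun i => a i ≤ k ∧ k ≤ d i), x t i)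
          - (∑ i ∈ Finset.univ.filter (fun i => a i ≤ k ∧ k ≤ b i),
              ∑ ℓ ∈ Finset.Icc (k + 1) (b i), xs t i ℓ)
          - (∑ i ∈ Finset.univ.filter (fun i => c i ≤ k ∧ k ≤ d i),
              ∑ ℓ ∈ Finset.Icc (c i) (k - 1), xe t i ℓ))) ≤ (J.card : ℝ) := by
    calc _ ≤ ∑ _k ∈ J, (1 : ℝ) :=
          Finset.sum_le_sum (fun k hk => hcap k (hJm hk))
      _ = (J.card : ℝ) := by simp
  have hA : ∀ t : Fin T, ∑ k ∈ J,
      ∑ i ∈ Finset.univ.filter (fun i => a i ≤ k ∧ k ≤ d i), x t i = ∑ i, x t i := by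
    intro t
    calc ∑ k ∈ J, ∑ i ∈ Finset.univ.filter (fun i => a i ≤ k ∧ k ≤ d i), x t i
        = ∑ k ∈ J, ∑ i : Fin n, if a i ≤ k ∧ k ≤ d i then x t i else 0 := by
          simp [Finset.sum_filter]
      _ = ∑ i : Fin n, ∑ k ∈ J, if a i ≤ k ∧ k ≤ d i then x t i else 0 :=
          Finset.sum_comm
      _ = ∑ i, x t i := by
          refine Finset.sum_congr rfl (fun i _ => ?_)
          rw [← Finset.sum_filter, hfd i, Finset.sum_singleton]
  have hB : ∀ t : Fin T, ∑ k ∈ J,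
      ∑ i ∈ Finset.univ.filter (fun i => a i ≤ k ∧ k ≤ b i),
        ∑ ℓ ∈ Finset.Icc (k + 1) (b i), xs t i ℓ
      = ∑ i, ∑ ℓ ∈ Finset.Icc (κ i + 1) (b i), xs t i ℓ := by
    intro t
    calc ∑ k ∈ J, ∑ i ∈ Finset.univ.filter (fun i => a i ≤ k ∧ k ≤ b i),
          ∑ ℓ ∈ Finset.Icc (k + 1) (b i), xs t i ℓ
        = ∑ k ∈ J, ∑ i : Fin n, if a i ≤ k ∧ k ≤ b i then
            ∑ ℓ ∈ Finset.Icc (k + 1) (b i), xs t i ℓ else 0 := by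
          simp [Finset.sum_filter]
      _ = ∑ i : Fin n, ∑ k ∈ J, if a i ≤ k ∧ k ≤ b i then
            ∑ ℓ ∈ Finset.Icc (k + 1) (b i), xs t i ℓ else 0 := Finset.sum_comm
      _ = ∑ i, ∑ ℓ ∈ Finset.Icc (κ i + 1) (b i), xs t i ℓ := by
          refine Finset.sum_congr rfl (fun i _ => ?_)
          rw [← Finset.sum_filter]; exact hfB t i
  have hC : ∀ t : Fin T, ∑ k ∈ J,
      ∑ i ∈ Finset.univ.filter (fun i => c i ≤ k ∧ k ≤ d i),
        ∑ ℓ ∈ Finset.Icc (c i) (k - 1), xe t i ℓ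
      = ∑ i, ∑ ℓ ∈ Finset.Icc (c i) (κ i - 1), xe t i ℓ := by
    intro t
    calc ∑ k ∈ J, ∑ i ∈ Finset.univ.filter (fun i => c i ≤ k ∧ k ≤ d i),
          ∑ ℓ ∈ Finset.Icc (c i) (k - 1), xe t i ℓ
        = ∑ k ∈ J, ∑ i : Fin n, if c i ≤ k ∧ k ≤ d i then
            ∑ ℓ ∈ Finset.Icc (c i) (k - 1), xe t i ℓ else 0 := by
          simp [Finset.sum_filter]
      _ = ∑ i : Fin n, ∑ k ∈ J, if c i ≤ k ∧ k ≤ d i then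
            ∑ ℓ ∈ Finset.Icc (c i) (k - 1), xe t i ℓ else 0 := Finset.sum_comm
      _ = ∑ i, ∑ ℓ ∈ Finset.Icc (c i) (κ i - 1), xe t i ℓ := by
          refine Finset.sum_congr rfl (fun i _ => ?_)
          rw [← Finset.sum_filter]; exact hfC t i
  have h2 : ∑ t : Fin T, ∑ i, x t i
      - (∑ t : Fin T, ∑ i, ∑ ℓ ∈ Finset.Icc (κ i + 1) (b i), xs t i ℓ)
      - (∑ t : Fin T, ∑ i, ∑ ℓ ∈ Finset.Icc (c i) (κ i - 1), xe t i ℓ)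
      ≤ (J.card : ℝ) := by
    refine le_trans (le_of_eq ?_) h1
    rw [Finset.sum_comm (s := J)]
    rw [← Finset.sum_sub_distrib, ← Finset.sum_sub_distrib]
    refine Finset.sum_congr rfl (fun t _ => ?_)
    rw [Finset.sum_sub_distrib, Finset.sum_sub_distrib, hA t, hB t, hC t]
  have hSB : ∑ t : Fin T, ∑ i, ∑ ℓ ∈ Finset.Icc (κ i + 1) (b i), xs t i ℓ
      ≤ ∑ i, ∑ ℓ ∈ Finset.Icc (κ i + 1) (b i), Ps i ℓ := by
    rw [Finset.sum_comm]
    refine Finset.sum_le_sum (fun i _ => ?_)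
    rw [Finset.sum_comm]
    exact Finset.sum_le_sum (fun ℓ _ => hmargS i ℓ)
  have hSC : ∑ t : Fin T, ∑ i, ∑ ℓ ∈ Finset.Icc (c i) (κ i - 1), xe t i ℓ
      ≤ ∑ i, ∑ ℓ ∈ Finset.Icc (c i) (κ i - 1), Pe i ℓ := by
    rw [Finset.sum_comm]
    refine Finset.sum_le_sum (fun i _ => ?_)
    rw [Finset.sum_comm]
    exact Finset.sum_le_sum (fun ℓ _ => hmargE i ℓ)
  have := Finset.sum_add_distrib (s := Finset.univ)
    (f := fun i => ∑ ℓ ∈ Finset.Icc (κ i + 1) (b i), Ps i ℓ)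
    (g := fun i => ∑ ℓ ∈ Finset.Icc (c i) (κ i - 1), Pe i ℓ)
  rw [this]
  linarith
end

section
/- Let n, m ∈ ℕ, w : {1,…,n} → ℝ≥0, and for each task i let a_i ≤ b_i ≤ c_i ≤ d_i be slots in {1,…,m}, with P^s_{ik} ≥ 0 supported on {a_i,…,b_i}, ∑_k P^s_{ik} = 1, and P^e_{ik} ≥ 0 supported on {c_i,…,d_i}, ∑_k P^e_{ik} = 1. Let S ⊆ {1,…,n} be a set of tasks whose pessimistic intervals {a_i,…,d_i}, i ∈ S, are pairwise disjoint, let T = |S|, and fix a bijection from S to the stages {1,…,T}, assigning each i ∈ S a distinct stage t(i). Define x^{ts}_{ik} := P^s_{ik} and x^{te}_{ik} := P^e_{ik} when i ∈ S and t = t(i), and x^{ts}_{ik} := 0, x^{te}_{ik} := 0 otherwise; set x^t_i := ∑_{k=1}^m x^{ts}_{ik}. Then this x is feasible for the LP relaxation DLP-P, i.e.: x^t_i = ∑_k x^{ts}_{ik} = ∑_k x^{te}_{ik} for all i, t; x^{ts}_{ik} = 0 for k ∉ {a_i,…,b_i} and x^{te}_{ik} = 0 for k ∉ {c_i,…,d_i};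 ∑_t x^{ts}_{ik} ≤ P^s_{ik} and ∑_t x^{te}_{ik} ≤ P^e_{ik} for all i, k; and for every slot k, ∑_{t=1}^{T} ( ∑_{i : a_i ≤ k ≤ d_i} x^t_i − ∑_{i : a_i ≤ k ≤ b_i} ∑_{ℓ=k+1}^{b_i} x^{ts}_{iℓ} − ∑_{i : c_i ≤ k ≤ d_i} ∑_{ℓ=c_i}^{k−1} x^{te}_{iℓ} ) ≤ 1. Moreover its objective value is ∑_{t=1}^T ∑_{i=1}^n w_i x^t_i = ∑_{i∈S} w_i. -/
/-- every independent set `S` of the pessimistic interval graph,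
scheduled one task per stage via a bijection `τ : S → {1,…,|S|}`, yields a
feasible solution of (DLP-P) of objective value `∑_{i∈S} w i`. -/
theorem stmt14 (n m : ℕ) (w : Fin n → ℝ) (hw : ∀ i, 0 ≤ w i)
    (a b c d : Fin n → ℕ)
    (ha : ∀ i, 1 ≤ a i) (hab : ∀ i, a i ≤ b i) (hbc : ∀ i, b i ≤ c i)
    (hcd : ∀ i, c i ≤ d i) (hdm : ∀ i, d i ≤ m)
    (Ps Pe : Fin n → ℕ → ℝ)
    (hPs0 : ∀ i k, 0 ≤ Ps i k) (hPe0 : ∀ i k, 0 ≤ Pe i k)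
    (hPsSupp : ∀ i k, k ∉ Finset.Icc (a i) (b i) → Ps i k = 0)
    (hPeSupp : ∀ i k, k ∉ Finset.Icc (c i) (d i) → Pe i k = 0)
    (hPsSum : ∀ i, ∑ k ∈ Finset.Icc 1 m, Ps i k = 1)
    (hPeSum : ∀ i, ∑ k ∈ Finset.Icc 1 m, Pe i k = 1)
    -- `S` is an independent set of the pessimistic interval graph
    (S : Finset (Fin n))
    (hdisj : (↑S : Set (Fin n)).Pairwise fun i j =>
      Disjoint (Finset.Icc (a i) (d i)) (Finset.Icc (a j) (d j)))
    -- a bijection from `S` onto the stages `{1,…,|S|}`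
    (τ : Fin n → ℕ) (hτ : Set.BijOn τ ↑S ↑(Finset.Icc 1 S.card))
    -- the constructed solution
    (xs xe : ℕ → Fin n → ℕ → ℝ) (x : ℕ → Fin n → ℝ)
    (hxsDef : ∀ t i k, xs t i k = if i ∈ S ∧ τ i = t then Ps i k else 0)
    (hxeDef : ∀ t i k, xe t i k = if i ∈ S ∧ τ i = t then Pe i k else 0)
    (hxDef : ∀ t i, x t i = ∑ k ∈ Finset.Icc 1 m, xs t i k) :
    -- (i) consistency
    (∀ t ∈ Finset.Icc 1 S.card, ∀ i,
        x t i = ∑ k ∈ Finset.Icc 1 m, xs t i k ∧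
        x t i = ∑ k ∈ Finset.Icc 1 m, xe t i k)
    -- (ii) supports
    ∧ (∀ t i k, k ∉ Finset.Icc (a i) (b i) → xs t i k = 0)
    ∧ (∀ t i k, k ∉ Finset.Icc (c i) (d i) → xe t i k = 0)
    -- (iv) marginal bounds
    ∧ (∀ i k, ∑ t ∈ Finset.Icc 1 S.card, xs t i k ≤ Ps i k)
    ∧ (∀ i k, ∑ t ∈ Finset.Icc 1 S.card, xe t i k ≤ Pe i k)
    -- (iii) slot capacity
    ∧ (∀ k ∈ Finset.Icc 1 m,
        ∑ t ∈ Finset.Icc 1 S.card,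
          ((∑ i ∈ Finset.univ.filter (fun i => a i ≤ k ∧ k ≤ d i), x t i)
            - (∑ i ∈ Finset.univ.filter (fun i => a i ≤ k ∧ k ≤ b i),
                ∑ ℓ ∈ Finset.Icc (k + 1) (b i), xs t i ℓ)
            - (∑ i ∈ Finset.univ.filter (fun i => c i ≤ k ∧ k ≤ d i),
                ∑ ℓ ∈ Finset.Icc (c i) (k - 1), xe t i ℓ)) ≤ 1)
    -- objective value
    ∧ ∑ t ∈ Finset.Icc 1 S.card, ∑ i, w i * x t i = ∑ i ∈ S, w i := by
  -- sum over stages of the indicator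
  have hsum : ∀ (i : Fin n) (f : ℕ → ℝ),
      ∑ t ∈ Finset.Icc 1 S.card, (if i ∈ S ∧ τ i = t then f t else 0)
        = if i ∈ S then f (τ i) else 0 := by
    intro i f
    by_cases hi : i ∈ S
    · simp only [hi, true_and, if_pos hi]
      rw [Finset.sum_ite_eq (Finset.Icc 1 S.card) (τ i) f]
      exact if_pos (hτ.mapsTo hi)
    · simp [hi]
  -- value of x
  have hx : ∀ t i, x t i = if i ∈ S ∧ τ i = t then 1 else 0 := by
    intro t i
    rw [hxDef]
    by_cases h : i ∈ S ∧ τ i = t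
    · simp only [if_pos h]
      simp_rw [hxsDef, if_pos h]
      exact hPsSum i
    · simp [hxsDef, h]
  have hxesum : ∀ t i, ∑ k ∈ Finset.Icc 1 m, xe t i k
      = if i ∈ S ∧ τ i = t then 1 else 0 := by
    intro t i
    by_cases h : i ∈ S ∧ τ i = t
    · simp only [if_pos h]
      simp_rw [hxeDef, if_pos h]
      exact hPeSum i
    · simp [hxeDef, h]
  refine ⟨?_, ?_, ?_, ?_, ?_, ?_, ?_⟩
  · intro t _ i
    refine ⟨hxDef t i, ?_⟩
    rw [hx, hxesum]
  · intro t i k hk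
    rw [hxsDef]
    by_cases h : i ∈ S ∧ τ i = t <;> simp [h, hPsSupp i k hk]
  · intro t i k hk
    rw [hxeDef]
    by_cases h : i ∈ S ∧ τ i = t <;> simp [h, hPeSupp i k hk]
  · intro i k
    simp_rw [hxsDef]
    rw [hsum i (fun _ => Ps i k)]
    by_cases hi : i ∈ S <;> simp [hi, hPs0 i k]
  · intro i k
    simp_rw [hxeDef]
    rw [hsum i (fun _ => Pe i k)]
    by_cases hi : i ∈ S <;> simp [hi, hPe0 i k]
  · -- slot capacity
    intro k hk
    have hB : ∀ t, 0 ≤ ∑ i ∈ Finset.univ.filter (fun i => a i ≤ k ∧ k ≤ b i),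
        ∑ ℓ ∈ Finset.Icc (k + 1) (b i), xs t i ℓ := by
      intro t
      refine Finset.sum_nonneg fun i _ => Finset.sum_nonneg fun ℓ _ => ?_
      rw [hxsDef]
      by_cases h : i ∈ S ∧ τ i = t <;> simp [h, hPs0]
    have hC : ∀ t, 0 ≤ ∑ i ∈ Finset.univ.filter (fun i => c i ≤ k ∧ k ≤ d i),
        ∑ ℓ ∈ Finset.Icc (c i) (k - 1), xe t i ℓ := by
      intro t
      refine Finset.sum_nonneg fun i _ => Finset.sum_nonneg fun ℓ _ => ?_
      rw [hxeDef]
      by_cases h : i ∈ S ∧ τ i = t <;> simp [h, hPe0]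
    calc ∑ t ∈ Finset.Icc 1 S.card,
          ((∑ i ∈ Finset.univ.filter (fun i => a i ≤ k ∧ k ≤ d i), x t i)
            - (∑ i ∈ Finset.univ.filter (fun i => a i ≤ k ∧ k ≤ b i),
                ∑ ℓ ∈ Finset.Icc (k + 1) (b i), xs t i ℓ)
            - (∑ i ∈ Finset.univ.filter (fun i => c i ≤ k ∧ k ≤ d i),
                ∑ ℓ ∈ Finset.Icc (c i) (k - 1), xe t i ℓ))
        ≤ ∑ t ∈ Finset.Icc 1 S.card,
            ∑ i ∈ Finset.univ.filter (fun i => a i ≤ k ∧ k ≤ d i), x t i := by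
          refine Finset.sum_le_sum fun t _ => ?_
          have := hB t
          have := hC t
          linarith
      _ = ∑ i ∈ Finset.univ.filter (fun i => a i ≤ k ∧ k ≤ d i),
            ∑ t ∈ Finset.Icc 1 S.card, x t i := Finset.sum_comm
      _ = ∑ i ∈ Finset.univ.filter (fun i => a i ≤ k ∧ k ≤ d i),
            (if i ∈ S then (1 : ℝ) else 0) := by
          refine Finset.sum_congr rfl fun i _ => ?_
          simp_rw [hx]
          exact hsum i (fun _ => 1)
      _ = ((Finset.univ.filter (fun i => a i ≤ k ∧ k ≤ d i)).filter
            (fun i => i ∈ S)).card := by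
          rw [Finset.sum_boole]
      _ ≤ 1 := by
          norm_cast
          rw [Finset.card_le_one]
          intro i hi j hj
          simp only [Finset.mem_filter, Finset.mem_univ, true_and] at hi hj
          by_contra hne
          exact Finset.disjoint_left.mp (hdisj hi.2 hj.2 hne)
            (Finset.mem_Icc.mpr hi.1) (Finset.mem_Icc.mpr hj.1)
  · -- objective
    rw [Finset.sum_comm]
    have : ∀ i : Fin n, ∑ t ∈ Finset.Icc 1 S.card, w i * x t i
        = if i ∈ S then w i else 0 := by
      intro i
      simp_rw [hx, mul_ite, mul_one, mul_zero]
      exact hsum i (fun _ => w i)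
    simp_rw [this]
    simp [Finset.sum_ite_mem]
end
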